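/- Let n ≥ 1, c ∈ ℤ^n with c ≥ 0, a ∈ B(c), and k ∈ {1,…,n} with a + 1_k ∈ B(c) (1_k the k-th unit vector). Then the string application S_{n,k}(f[a]) in K(c) is defined and equals f[a + 1_k]. Consequently, if also a + 1_{k′} ∈ B(c) and a + 1_k + 1_{k′} ∈ B(c) for some k′ ≠ k, then S_{n,k}(S_{n,k′}(f[a])) = S_{n,k′}(S_{n,k}(f[a])) = f[a + 1_k + 1_{k′}]; and every principal function satisfies f[a] = S_{n,n}^{a_n}(⋯(S_{n,1}^{a_1}(f[0]))⋯). -/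
import Mathlib


open scoped Classical

namespace CrystalA

/-- A node `(i, k, j)` of the (extended) supporting graph stands for `v_i^k(j)`. -/
abbrev Node : Type := ℕ × ℕ × ℕ

/-- Membership in the supporting graph `G`:
`1 ≤ j ≤ i ≤ n` and `i - j + 1 ≤ k ≤ n - j + 1`. -/
def IsNode (n : ℕ) (v : Node) : Prop :=
  1 ≤ v.2.2 ∧ v.2.2 ≤ v.1 ∧ v.1 ≤ n ∧ v.1 + 1 ≤ v.2.1 + v.2.2 ∧ v.2.1 + v.2.2 ≤ n + 1

/-- Membership in the extended graph `Ḡ`: `0 ≤ j ≤ n`, `j ≤ i ≤ n + 1`, `1 ≤ k ≤ n`. -/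
def IsExtNode (n : ℕ) (v : Node) : Prop :=
  v.2.2 ≤ n ∧ v.2.2 ≤ v.1 ∧ v.1 ≤ n + 1 ∧ 1 ≤ v.2.1 ∧ v.2.1 ≤ n

/-- Ascending step `v_i^k(j) → v_{i-1}^k(j)`. -/
def Asc (u w : Node) : Prop := u.2.1 = w.2.1 ∧ u.2.2 = w.2.2 ∧ u.1 = w.1 + 1

/-- Descending step `v_i^k(j) → v_{i+1}^k(j+1)`. -/
def Desc (u w : Node) : Prop := u.2.1 = w.2.1 ∧ w.2.2 = u.2.2 + 1 ∧ w.1 = u.1 + 1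

/-- Edges of the supporting graph `G`. -/
def GEdge (n : ℕ) (u w : Node) : Prop := IsNode n u ∧ IsNode n w ∧ (Asc u w ∨ Desc u w)

/-- Edges of the extended graph `Ḡ`. -/
def ExtEdge (n : ℕ) (u w : Node) : Prop := IsExtNode n u ∧ IsExtNode n w ∧ (Asc u w ∨ Desc u w)

/-- The extension of `f : V(G) → ℤ` to `Ḡ`: on an extra node it takes value `c_k`
if there is a directed path in `Ḡ^k` from it to a node of `G^k`, and `0` otherwise. -/
noncomputable def ext (n : ℕ) (c : ℕ → ℤ) (f : Node → ℤ) (v : Node) : ℤ :=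
  if IsNode n v then f v
  else if ∃ w, IsNode n w ∧ Relation.ReflTransGen (ExtEdge n) v w then c v.2.1 else 0

/-- Increment `∂f` of (the extension of) `f` on the edge `(u, w)`. -/
noncomputable def dP (n : ℕ) (c : ℕ → ℤ) (f : Node → ℤ) (u w : Node) : ℤ :=
  ext n c f u - ext n c f w

/-- Head of the SE-edge of `v = v_i^k(j)`, namely `v_{i+1}^k(j+1)`. -/
def seNode (v : Node) : Node := (v.1 + 1, v.2.1, v.2.2 + 1)

/-- Tail of the SW-edge of `v = v_i^k(j)`, namely `v_{i+1}^k(j)`. -/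
def swNode (v : Node) : Node := (v.1 + 1, v.2.1, v.2.2)

/-- Tail of the NW-edge of `v = v_i^k(j)`, namely `v_{i-1}^k(j-1)`. -/
def nwNode (v : Node) : Node := (v.1 - 1, v.2.1, v.2.2 - 1)

/-- The SE-edge of `v` is tight for `f`. -/
def SEtight (n : ℕ) (c : ℕ → ℤ) (f : Node → ℤ) (v : Node) : Prop :=
  dP n c f v (seNode v) = 0

/-- The SW-edge of `v` is tight for `f`. -/
def SWtight (n : ℕ) (c : ℕ → ℤ) (f : Node → ℤ) (v : Node) : Prop :=
  dP n c f (swNode v) v = 0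

/-- The node `v_i^k(j)` has the switch property in the multinode `V_i(j)`:
SE-edges of preceding nodes are tight and SW-edges of succeeding nodes are tight. -/
def SwitchAt (n : ℕ) (c : ℕ → ℤ) (f : Node → ℤ) (i j k : ℕ) : Prop :=
  (∀ k', i + 1 ≤ k' + j → k' < k → SEtight n c f (i, k', j)) ∧
  (∀ k', k < k' → k' + j ≤ n + 1 → SWtight n c f (i, k', j))

/-- Feasible functions of the crossing model (normalized to vanish off `G`). -/
def Feasible (n : ℕ) (c : ℕ → ℤ) (f : Node → ℤ) : Prop :=
  (∀ u w, GEdge n u w → 0 ≤ f u - f w) ∧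
  (∀ v, IsNode n v → 0 ≤ f v ∧ f v ≤ c v.2.1) ∧
  (∀ i j, 1 ≤ j → j ≤ i → i ≤ n → ∃ k, i + 1 ≤ k + j ∧ k + j ≤ n + 1 ∧ SwitchAt n c f i j k) ∧
  (∀ v, ¬ IsNode n v → f v = 0)

/-- `v_i^k(j)` is the switch-node of the multinode `V_i(j)`: the first node
with the switch property. -/
def IsSwitchNode (n : ℕ) (c : ℕ → ℤ) (f : Node → ℤ) (i j k : ℕ) : Prop :=
  i + 1 ≤ k + j ∧ k + j ≤ n + 1 ∧ SwitchAt n c f i j k ∧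
  ∀ k', i + 1 ≤ k' + j → SwitchAt n c f i j k' → k ≤ k'

/-- The slack `ε(v)` at a node `v = v_i^k(j)`. -/
noncomputable def slack (n : ℕ) (c : ℕ → ℤ) (f : Node → ℤ) (v : Node) : ℤ :=
  dP n c f (nwNode v) v - dP n c f (v.1, v.2.1, v.2.2 - 1) (v.1 + 1, v.2.1, v.2.2)

/-- The total slack `ε_i(j)` at the multinode `V_i(j)`. -/
noncomputable def epsSum (n : ℕ) (c : ℕ → ℤ) (f : Node → ℤ) (i j : ℕ) : ℤ :=
  ∑ k ∈ Finset.Icc (i + 1 - j) (n + 1 - j), slack n c f (i, k, j)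

/-- `ε_i(p, j) = ε_i(p) + ⋯ + ε_i(j)`. -/
noncomputable def epsInt (n : ℕ) (c : ℕ → ℤ) (f : Node → ℤ) (i p j : ℕ) : ℤ :=
  ∑ q ∈ Finset.Icc p j, epsSum n c f i q

/-- The reduced slack `ε̃_i(j)`. -/
noncomputable def redSlack (n : ℕ) (c : ℕ → ℤ) (f : Node → ℤ) (i j : ℕ) : ℤ :=
  if h : (Finset.Icc 1 j).Nonempty
  then max 0 ((Finset.Icc 1 j).inf' h fun p => epsInt n c f i p j)
  else 0

/-- `V_i(j)` is the active multinode for `f` and color `i`. -/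
def Active (n : ℕ) (c : ℕ → ℤ) (f : Node → ℤ) (i j : ℕ) : Prop :=
  1 ≤ j ∧ j ≤ i ∧ 0 < redSlack n c f i j ∧ ∀ q, j < q → q ≤ i → redSlack n c f i q = 0

/-- The edge relation of color `i` of the crystal graph `K(c)`:
`g = φ_i(f)` with `f, g` feasible. -/
def Move (n : ℕ) (c : ℕ → ℤ) (i : ℕ) (f g : Node → ℤ) : Prop :=
  Feasible n c f ∧ Feasible n c g ∧ 1 ≤ i ∧ i ≤ n ∧
  ∃ j k, Active n c f i j ∧ IsSwitchNode n c f i j k ∧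
    g = Function.update f (i, k, j) (f (i, k, j) + 1)

/-- `SeqRel n c L f g`: applying the operators `F_i` for `i ∈ L` (head first)
to `f` is defined and yields `g`. -/
def SeqRel (n : ℕ) (c : ℕ → ℤ) : List ℕ → (Node → ℤ) → (Node → ℤ) → Prop
  | [], f, g => f = g
  | i :: L, f, g => ∃ h, Move n c i f h ∧ SeqRel n c L h g

/-- The substring `w_{m,k,j} = F_j F_{j+1} ⋯ F_{j+k-1}` (rightmost applied first),
as a list of colors in order of application. -/
def wList (k j : ℕ) : List ℕ := (List.range k).map fun t => j + k - 1 - t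

/-- The operator string `S_{m,k} = w_{m,k,m-k+1} ⋯ w_{m,k,2} w_{m,k,1}`
as a list of colors in order of application. -/
def sList (m k : ℕ) : List ℕ := ((List.range (m - k + 1)).map fun t => wList k (t + 1)).flatten

/-- The `p`-th power `S_{m,k}^p` as a list of colors in order of application. -/
def sPow (m k p : ℕ) : List ℕ := (List.replicate p (sList m k)).flatten

/-- The composite `S_{m,kmax}^{p kmax} ∘ ⋯ ∘ S_{m,1}^{p 1}` as a list of colors
in order of application. -/
def sPowChain (m : ℕ) (p : ℕ → ℕ) (kmax : ℕ) : List ℕ :=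
  ((List.range kmax).map fun t => sPow m (t + 1) (p (t + 1))).flatten

/-- Replacing each operator `F_j` by `F_{j+1}` in a string. -/
def shiftList (L : List ℕ) : List ℕ := L.map (· + 1)

/-- The string `T_m` obtained from `S_{n-1,m-1}` by replacing each `F_j` by `F_{j+1}`. -/
def tList (n m : ℕ) : List ℕ := shiftList (sList (n - 1) (m - 1))

/-- The composite `T_n^{q n} ∘ ⋯ ∘ T_2^{q 2}` as a list of colors in order of application. -/
def tChain (n : ℕ) (q : ℕ → ℕ) : List ℕ :=
  ((List.range (n - 1)).map fun t => (List.replicate (q (t + 2)) (tList n (t + 2))).flatten).flatten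

/-- The principal function `f[a]`, constant `a_k` on `G^k`. -/
noncomputable def principal (n : ℕ) (a : ℕ → ℤ) : Node → ℤ := fun v =>
  if IsNode n v then a v.2.1 else 0

/-- One (undirected) step in the subgraph of `K(c)` with colors `lo, …, hi`. -/
def ColsStep (n : ℕ) (c : ℕ → ℤ) (lo hi : ℕ) (f g : Node → ℤ) : Prop :=
  ∃ i, lo ≤ i ∧ i ≤ hi ∧ (Move n c i f g ∨ Move n c i g f)

/-- `f` and `g` lie in the same connected component of the subgraph of `K(c)`
formed by all vertices and the edges of colors `lo, …, hi`. -/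
def SameComp (n : ℕ) (c : ℕ → ℤ) (lo hi : ℕ) (f g : Node → ℤ) : Prop :=
  Relation.ReflTransGen (ColsStep n c lo hi) f g

/-- Reachability by directed paths in `K(c)`. -/
def Reach (n : ℕ) (c : ℕ → ℤ) (f g : Node → ℤ) : Prop :=
  Relation.ReflTransGen (fun x y => ∃ i, Move n c i x y) f g

/-- The function `f_{a,Δ}` (with the renaming `x_m(j) = v_{m+j-1}^k(j)`, `m = i - j + 1`). -/
noncomputable def fDelta (n : ℕ) (a Δ : ℕ → ℤ) : Node → ℤ := fun v =>
  if IsNode n v then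
    (let k := v.2.1
     let j := v.2.2
     let m := v.1 + 1 - v.2.2
     if m = k then (if j = n - k + 1 then a k else a k + max (Δ k) 0)
     else if j = n - k + 1 then a k + min (Δ (k - 1)) 0
     else a k + max (Δ k) 0 + min (Δ (k - 1)) 0)
  else 0

/-! ### Crystal axioms -/

/-- `h_i(v)`: the number of edges of the maximal `i`-colored path starting at `v`. -/
noncomputable def headLen {V : Type*} (E : ℕ → V → V → Prop) (i : ℕ) (v : V) : ℕ :=
  sSup {m | ∃ g : ℕ → V, g 0 = v ∧ ∀ l, l < m → E i (g l) (g (l + 1))}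

/-- `t_i(v)`: the number of edges of the maximal `i`-colored path ending at `v`. -/
noncomputable def tailLen {V : Type*} (E : ℕ → V → V → Prop) (i : ℕ) (v : V) : ℕ :=
  sSup {m | ∃ g : ℕ → V, g m = v ∧ ∀ l, l < m → E i (g l) (g (l + 1))}

/-- The label `ℓ_j(e) = h_j(v) - h_j(u)` of an edge `e = (u, v)` w.r.t. color `j`. -/
noncomputable def lab {V : Type*} (E : ℕ → V → V → Prop) (j : ℕ) (u v : V) : ℤ :=
  (headLen E j v : ℤ) - (headLen E j u : ℤ)

/-- Neighboring colors: `|i - j| = 1`. -/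
def Nbr (i j : ℕ) : Prop := i = j + 1 ∨ j = i + 1

/-- Distant colors: `|i - j| ≥ 2`. -/
def Dist (i j : ℕ) : Prop := i + 2 ≤ j ∨ j + 2 ≤ i

/-- The (regular) `A_n`-crystal axioms for an `n`-colored digraph with edge
relations `E i` (`i` the color). -/
structure IsAnCrystal (n : ℕ) {V : Type*} (E : ℕ → V → V → Prop) : Prop where
  colorBound : ∀ i u v, E i u v → 1 ≤ i ∧ i ≤ n
  connected : ∀ u v : V, Relation.ReflTransGen (fun x y => ∃ i, E i x y ∨ E i y x) u v
  outFun : ∀ i u v v', E i u v → E i u v' → v = v'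
  inFun : ∀ i u u' v, E i u v → E i u' v → u = u'
  a1 : ∀ i v, ∃ (t h : ℕ) (g : ℕ → V), g t = v ∧ (∀ m, m < t + h → E i (g m) (g (m + 1))) ∧
      (∀ m m', m ≤ t + h → m' ≤ t + h → g m = g m' → m = m') ∧
      (¬ ∃ u, E i u (g 0)) ∧ (¬ ∃ w, E i (g (t + h)) w)
  a2_tail : ∀ i j u v, E i u v → 1 ≤ j → j ≤ n → j ≠ i → tailLen E j v ≤ tailLen E j u
  a2_head : ∀ i j u v, E i u v → 1 ≤ j → j ≤ n → j ≠ i → headLen E j u ≤ headLen E j v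
  a2_diff : ∀ i j u v, E i u v → 1 ≤ j → j ≤ n → j ≠ i →
      ((headLen E j u : ℤ) - (tailLen E j u : ℤ)) - ((headLen E j v : ℤ) - (tailLen E j v : ℤ))
        = if Nbr i j then -1 else 0
  a2_convex : ∀ i j u v w, E i u v → E i v w → 1 ≤ j → j ≤ n → j ≠ i →
      2 * headLen E j v ≤ headLen E j u + headLen E j w
  a3_fwd : ∀ i j u v v', Nbr i j → E i u v → E j u v' → lab E j u v = 0 →
      lab E i u v' = 1 ∧ ∃ w, E i v' w ∧ E j v w
  a3_bwd : ∀ i j u u' v, Nbr i j → E i u v → E j u' v → lab E j u v = 1 →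
      lab E i u' v = 0 ∧ ∃ w, E i w u' ∧ E j w u
  a4_fwd : ∀ i j u v v', Nbr i j → E i u v → E j u v' → lab E j u v = 1 → lab E i u v' = 1 →
      ∃ w x2 x3 y2 y3, E j v x2 ∧ E j x2 x3 ∧ E i x3 w ∧ E i v' y2 ∧ E i y2 y3 ∧ E j y3 w
  a4_bwd : ∀ i j u u' v, Nbr i j → E i u v → E j u' v → lab E j u v = 0 → lab E i u' v = 0 →
      ∃ w x2 x3 y2 y3, E j x2 u ∧ E j x3 x2 ∧ E i w x3 ∧ E i y2 u' ∧ E i y3 y2 ∧ E j w y3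
  a5_ff : ∀ i j v x w y w', Dist i j → E j v x → E i x w → E i v y → E j y w' → w = w'
  a5_fb : ∀ i j v x w y w', Dist i j → E j x v → E i x w → E i v y → E j w' y → w = w'
  a5_bb : ∀ i j v x w y w', Dist i j → E j x v → E i w x → E i y v → E j w' y → w = w'


section Aux
variable {n : ℕ} {c a : ℕ → ℤ}

lemma isNode_iff (i K j : ℕ) : IsNode n (i, K, j) ↔
    (1 ≤ j ∧ j ≤ i ∧ i ≤ n ∧ i + 1 ≤ K + j ∧ K + j ≤ n + 1) := Iff.rfl

lemma isExtNode_iff (i K j : ℕ) : IsExtNode n (i, K, j) ↔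
    (j ≤ n ∧ j ≤ i ∧ i ≤ n + 1 ∧ 1 ≤ K ∧ K ≤ n) := Iff.rfl

private lemma extEdge_sum {u w : Node} (h : ExtEdge n u w) :
    u.2.1 + u.2.2 ≤ w.2.1 + w.2.2 := by
  obtain ⟨-, -, ⟨h1, h2, h3⟩ | ⟨h1, h2, h3⟩⟩ := h <;> omega

private lemma reach_sum {v w : Node} (h : Relation.ReflTransGen (ExtEdge n) v w) :
    v.2.1 + v.2.2 ≤ w.2.1 + w.2.2 := by
  induction h with
  | refl => exact le_refl _
  | tail _ e ih => exact le_trans ih (extEdge_sum e)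

private lemma asc_chain (i K j : ℕ) (hji : j ≤ i) (hjn : j ≤ n) (hK1 : 1 ≤ K) (hKn : K ≤ n) :
    ∀ d, i + d ≤ n + 1 → Relation.ReflTransGen (ExtEdge n) (i + d, K, j) (i, K, j) := by
  intro d
  induction d with
  | zero => intro _; exact Relation.ReflTransGen.refl
  | succ d ih =>
      intro hd
      have e : ExtEdge n (i + (d + 1), K, j) (i + d, K, j) := by
        refine ⟨?_, ?_, Or.inl ⟨rfl, rfl, by omega⟩⟩
        · rw [isExtNode_iff]; omega
        · rw [isExtNode_iff]; omega
      exact (Relation.ReflTransGen.single e).trans (ih (by omega))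

private lemma reach_iff {v : Node} (hv : ¬ IsNode n v) :
    (∃ w, IsNode n w ∧ Relation.ReflTransGen (ExtEdge n) v w) ↔
      (IsExtNode n v ∧ v.2.1 + v.2.2 ≤ n + 1) := by
  constructor
  · rintro ⟨w, hw, hp⟩
    obtain ⟨h1, h2, h3, h4, h5⟩ := hw
    refine ⟨?_, le_trans (reach_sum hp) (by omega)⟩
    rcases (Relation.ReflTransGen.cases_head hp) with rfl | ⟨u, e, -⟩
    · exact absurd ⟨h1, h2, h3, h4, h5⟩ hv
    · exact e.1
  · rintro ⟨he, hsum⟩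
    obtain ⟨i, K, j⟩ := v
    rw [isExtNode_iff] at he
    rw [isNode_iff] at hv
    dsimp only at hsum
    rcases Nat.eq_zero_or_pos j with rfl | hj
    · refine ⟨(1, K, 1), by rw [isNode_iff]; omega, ?_⟩
      have h := asc_chain (n := n) 0 K 0 (by omega) (by omega) (by omega) (by omega) i (by omega)
      refine Relation.ReflTransGen.trans (by simpa using h) (Relation.ReflTransGen.single ?_)
      refine ⟨by rw [isExtNode_iff]; omega, by rw [isExtNode_iff]; omega,
        Or.inr ⟨rfl, rfl, rfl⟩⟩
    · have hi : K + j - 1 ≤ i := by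
        by_contra hlt
        exact hv (by omega)
      refine ⟨(K + j - 1, K, j), by rw [isNode_iff]; omega, ?_⟩
      have h := asc_chain (n := n) (K + j - 1) K j (by omega) (by omega) (by omega) (by omega)
        (i - (K + j - 1)) (by omega)
      have : K + j - 1 + (i - (K + j - 1)) = i := by omega
      rw [this] at h
      exact h

private lemma ext_eval (f : Node → ℤ) (v : Node) :
    ext n c f v = if IsNode n v then f v
      else if IsExtNode n v ∧ v.2.1 + v.2.2 ≤ n + 1 then c v.2.1 else 0 := by
  by_cases h : IsNode n v
  · rw [ext, if_pos h, if_pos h]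
  · rw [ext, if_neg h, if_neg h]
    by_cases h2 : IsExtNode n v ∧ v.2.1 + v.2.2 ≤ n + 1
    · rw [if_pos ((reach_iff h).mpr h2), if_pos h2]
    · rw [if_neg (fun hx => h2 ((reach_iff h).mp hx)), if_neg h2]

/-- The intermediate state of the string `S_{n,k}` on the principal function `f[a]`:
column `j₀` is being processed, nodes of `G^k` in columns `< j₀` and levels `> i₀` of
column `j₀` have been incremented. -/
noncomputable def st (n : ℕ) (a : ℕ → ℤ) (k j₀ i₀ : ℕ) : Node → ℤ := fun v =>
  if IsNode n v then
    a v.2.1 + (if v.2.1 = k ∧ (v.2.2 < j₀ ∨ (v.2.2 = j₀ ∧ i₀ < v.1)) then 1 else 0)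
  else 0

/-- Explicit value of the extension of `st`. -/
noncomputable def Ev (n : ℕ) (c a : ℕ → ℤ) (k j₀ i₀ : ℕ) (v : Node) : ℤ :=
  if IsNode n v then
    a v.2.1 + (if v.2.1 = k ∧ (v.2.2 < j₀ ∨ (v.2.2 = j₀ ∧ i₀ < v.1)) then 1 else 0)
  else if IsExtNode n v ∧ v.2.1 + v.2.2 ≤ n + 1 then c v.2.1 else 0

lemma ext_st {k j₀ i₀ : ℕ} (v : Node) :
    ext n c (st n a k j₀ i₀) v = Ev n c a k j₀ i₀ v := by
  rw [ext_eval]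
  unfold st Ev
  split_ifs with h <;> rfl

end Aux
section Slacks
variable {n : ℕ} {c a : ℕ → ℤ} {k j₀ i₀ K q p j : ℕ}

lemma Ev_node {v : Node} (h : IsNode n v) :
    Ev n c a k j₀ i₀ v
      = a v.2.1 + (if v.2.1 = k ∧ (v.2.2 < j₀ ∨ (v.2.2 = j₀ ∧ i₀ < v.1)) then 1 else 0) := by
  unfold Ev; rw [if_pos h]

lemma Ev_ext {v : Node} (h : ¬ IsNode n v) (h2 : IsExtNode n v) (h3 : v.2.1 + v.2.2 ≤ n + 1) :
    Ev n c a k j₀ i₀ v = c v.2.1 := by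
  unfold Ev; rw [if_neg h, if_pos ⟨h2, h3⟩]

lemma slack_q2 (hq : 2 ≤ q) (hqi : q ≤ i₀) (hin : i₀ ≤ n)
    (h1 : i₀ + 1 ≤ K + q) (h2 : K + q ≤ n + 1) :
    slack n c (st n a k j₀ i₀) (i₀, K, q) = if K = k ∧ q = j₀ then 1 else 0 := by
  unfold slack dP nwNode
  dsimp only
  rw [ext_st, ext_st, ext_st, ext_st]
  rw [Ev_node (v := (i₀ - 1, K, q - 1)) (by rw [isNode_iff]; omega),
    Ev_node (v := (i₀, K, q)) (by rw [isNode_iff]; omega)]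
  by_cases hKq : i₀ + 2 ≤ K + q
  · rw [Ev_node (v := (i₀, K, q - 1)) (by rw [isNode_iff]; omega),
      Ev_node (v := (i₀ + 1, K, q)) (by rw [isNode_iff]; omega)]
    dsimp only
    split_ifs <;> omega
  · rw [Ev_ext (v := (i₀, K, q - 1)) (by rw [isNode_iff]; omega)
        (by rw [isExtNode_iff]; omega) (by dsimp only; omega),
      Ev_ext (v := (i₀ + 1, K, q)) (by rw [isNode_iff]; omega)
        (by rw [isExtNode_iff]; omega) (by dsimp only; omega)]
    dsimp only
    split_ifs <;> omega

lemma slack_q1 (hi1 : 1 ≤ i₀) (hin : i₀ ≤ n) (h1 : i₀ ≤ K) (h2 : K ≤ n) (hj₀ : 1 ≤ j₀) :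
    slack n c (st n a k j₀ i₀) (i₀, K, 1) =
      if K = i₀ then c K - a K - (if K = k ∧ 2 ≤ j₀ then 1 else 0)
      else if K = k ∧ j₀ = 1 then 1 else 0 := by
  unfold slack dP nwNode
  dsimp only
  rw [ext_st, ext_st, ext_st, ext_st]
  rw [Ev_ext (v := (i₀ - 1, K, 1 - 1)) (by rw [isNode_iff]; omega)
      (by rw [isExtNode_iff]; omega) (by dsimp only; omega),
    Ev_node (v := (i₀, K, 1)) (by rw [isNode_iff]; omega),
    Ev_ext (v := (i₀, K, 1 - 1)) (by rw [isNode_iff]; omega)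
      (by rw [isExtNode_iff]; omega) (by dsimp only; omega)]
  by_cases hKi : i₀ + 1 ≤ K
  · rw [Ev_node (v := (i₀ + 1, K, 1)) (by rw [isNode_iff]; omega)]
    dsimp only
    split_ifs <;> omega
  · rw [Ev_ext (v := (i₀ + 1, K, 1)) (by rw [isNode_iff]; omega)
      (by rw [isExtNode_iff]; omega) (by dsimp only; omega)]
    dsimp only
    split_ifs <;> omega

end Slacks
section SlackSums
variable {n : ℕ} {c a : ℕ → ℤ} {k j₀ i₀ K q p j : ℕ}

lemma epsSum_st_q2 (hq : 2 ≤ q) (hqi : q ≤ i₀) (hj₀ : 1 ≤ j₀) (hji : j₀ ≤ i₀)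
    (hik : i₀ + 1 ≤ j₀ + k) (hkn : j₀ + k ≤ n + 1) :
    epsSum n c (st n a k j₀ i₀) i₀ q = if q = j₀ then 1 else 0 := by
  unfold epsSum
  have hstep : ∀ K ∈ Finset.Icc (i₀ + 1 - q) (n + 1 - q),
      slack n c (st n a k j₀ i₀) (i₀, K, q) = if K = k ∧ q = j₀ then 1 else 0 := by
    intro K hK
    rw [Finset.mem_Icc] at hK
    exact slack_q2 hq hqi (by omega) (by omega) (by omega)
  rw [Finset.sum_congr rfl hstep]
  by_cases hqj : q = j₀
  · rw [if_pos hqj]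
    have hstep2 : ∀ K ∈ Finset.Icc (i₀ + 1 - q) (n + 1 - q),
        (if K = k ∧ q = j₀ then (1 : ℤ) else 0) = if K = k then 1 else 0 := by
      intro K _; simp [hqj]
    rw [Finset.sum_congr rfl hstep2,
      Finset.sum_ite_eq' (Finset.Icc (i₀ + 1 - q) (n + 1 - q)) k (fun _ => (1 : ℤ)),
      if_pos (Finset.mem_Icc.mpr ⟨by omega, by omega⟩)]
  · simp [hqj]

lemma epsSum_st_q1_nonneg (hj₀ : 1 ≤ j₀) (hji : j₀ ≤ i₀)
    (hik : i₀ + 1 ≤ j₀ + k) (hkn : j₀ + k ≤ n + 1)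
    (ha0 : ∀ K, 1 ≤ K → K ≤ n → 0 ≤ a K ∧ a K ≤ c K) (hak : a k + 1 ≤ c k) :
    0 ≤ epsSum n c (st n a k j₀ i₀) i₀ 1 := by
  unfold epsSum
  refine Finset.sum_nonneg (fun K hK => ?_)
  rw [Finset.mem_Icc] at hK
  rw [slack_q1 (by omega) (by omega) (by omega) (by omega) hj₀]
  have hb := ha0 K (by omega) (by omega)
  rcases eq_or_ne K k with rfl | hKk
  · split_ifs <;> omega
  · split_ifs <;> omega

lemma epsSum_st_q1_pos (hji : 1 ≤ i₀)
    (hik : i₀ + 1 ≤ 1 + k) (hkn : 1 + k ≤ n + 1)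
    (ha0 : ∀ K, 1 ≤ K → K ≤ n → 0 ≤ a K ∧ a K ≤ c K) (hak : a k + 1 ≤ c k) :
    1 ≤ epsSum n c (st n a k 1 i₀) i₀ 1 := by
  unfold epsSum
  have hmem : k ∈ Finset.Icc (i₀ + 1 - 1) (n + 1 - 1) := Finset.mem_Icc.mpr ⟨by omega, by omega⟩
  have hterm : 1 ≤ slack n c (st n a k 1 i₀) (i₀, k, 1) := by
    rw [slack_q1 (by omega) (by omega) (by omega) (by omega) le_rfl]
    split_ifs <;> omega
  refine le_trans hterm
    (Finset.single_le_sum (f := fun K => slack n c (st n a k 1 i₀) (i₀, K, 1))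
      (fun K hK => ?_) hmem)
  rw [Finset.mem_Icc] at hK
  rw [slack_q1 (by omega) (by omega) (by omega) (by omega) le_rfl]
  have hb := ha0 K (by omega) (by omega)
  rcases eq_or_ne K k with rfl | hKk
  · split_ifs <;> omega
  · split_ifs <;> omega

lemma epsInt_st_zero (hj : j₀ < j) (hji : j ≤ i₀) (hj₀ : 1 ≤ j₀)
    (hik : i₀ + 1 ≤ j₀ + k) (hkn : j₀ + k ≤ n + 1) :
    epsInt n c (st n a k j₀ i₀) i₀ j j = 0 := by
  unfold epsInt
  rw [Finset.Icc_self, Finset.sum_singleton,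
    epsSum_st_q2 (by omega) (by omega) hj₀ (by omega) hik hkn, if_neg (by omega)]

lemma epsInt_st_one (hp1 : 1 ≤ p) (hpj : p ≤ j₀) (hj₀ : 1 ≤ j₀) (hji : j₀ ≤ i₀)
    (hik : i₀ + 1 ≤ j₀ + k) (hkn : j₀ + k ≤ n + 1)
    (ha0 : ∀ K, 1 ≤ K → K ≤ n → 0 ≤ a K ∧ a K ≤ c K) (hak : a k + 1 ≤ c k) :
    1 ≤ epsInt n c (st n a k j₀ i₀) i₀ p j₀ := by
  unfold epsInt
  have hsum2 : ∀ p', 2 ≤ p' → p' ≤ j₀ →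
      (∑ q ∈ Finset.Icc p' j₀, epsSum n c (st n a k j₀ i₀) i₀ q) = 1 := by
    intro p' hp'2 hp'j
    have hstep : ∀ q ∈ Finset.Icc p' j₀,
        epsSum n c (st n a k j₀ i₀) i₀ q = if q = j₀ then 1 else 0 := by
      intro q hq
      rw [Finset.mem_Icc] at hq
      exact epsSum_st_q2 (by omega) (by omega) hj₀ hji hik hkn
    rw [Finset.sum_congr rfl hstep,
      Finset.sum_ite_eq' (Finset.Icc p' j₀) j₀ (fun _ => (1 : ℤ)),
      if_pos (Finset.mem_Icc.mpr ⟨hp'j, le_rfl⟩)]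
  rcases eq_or_lt_of_le hp1 with h1 | h1
  · -- p = 1
    rcases eq_or_lt_of_le hj₀ with hj1 | hj1
    · rw [← h1, ← hj1]
      rw [Finset.Icc_self, Finset.sum_singleton]
      exact epsSum_st_q1_pos (a := a) (c := c) (k := k) (i₀ := i₀)
        (by omega) (by omega) (by omega) ha0 hak
    · have hsplit : Finset.Icc 1 j₀ = insert 1 (Finset.Icc 2 j₀) := by
        ext x; simp only [Finset.mem_Icc, Finset.mem_insert]; omega
      rw [← h1, hsplit, Finset.sum_insert (by simp)]
      rw [hsum2 2 le_rfl (by omega)]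
      have := epsSum_st_q1_nonneg hj₀ hji hik hkn ha0 hak
      omega
  · rw [hsum2 p (by omega) hpj]

lemma redSlack_st_pos (hj₀ : 1 ≤ j₀) (hji : j₀ ≤ i₀)
    (hik : i₀ + 1 ≤ j₀ + k) (hkn : j₀ + k ≤ n + 1)
    (ha0 : ∀ K, 1 ≤ K → K ≤ n → 0 ≤ a K ∧ a K ≤ c K) (hak : a k + 1 ≤ c k) :
    0 < redSlack n c (st n a k j₀ i₀) i₀ j₀ := by
  have hne : (Finset.Icc 1 j₀).Nonempty := ⟨1, Finset.mem_Icc.mpr ⟨le_rfl, hj₀⟩⟩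
  rw [redSlack, dif_pos hne]
  have h : 1 ≤ (Finset.Icc 1 j₀).inf' hne fun p => epsInt n c (st n a k j₀ i₀) i₀ p j₀ := by
    refine Finset.le_inf' hne _ (fun p hp => ?_)
    rw [Finset.mem_Icc] at hp
    exact epsInt_st_one hp.1 hp.2 hj₀ hji hik hkn ha0 hak
  exact lt_of_lt_of_le one_pos (le_trans h (le_max_right 0 _))

lemma redSlack_st_zero (hj : j₀ < j) (hji : j ≤ i₀) (hj₀ : 1 ≤ j₀)
    (hik : i₀ + 1 ≤ j₀ + k) (hkn : j₀ + k ≤ n + 1) :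
    redSlack n c (st n a k j₀ i₀) i₀ j = 0 := by
  have hj1 : 1 ≤ j := by omega
  have hne : (Finset.Icc 1 j).Nonempty := ⟨1, Finset.mem_Icc.mpr ⟨le_rfl, hj1⟩⟩
  rw [redSlack, dif_pos hne]
  have hle := Finset.inf'_le (s := Finset.Icc 1 j)
    (fun p => epsInt n c (st n a k j₀ i₀) i₀ p j) (Finset.mem_Icc.mpr ⟨hj1, le_rfl⟩)
  rw [epsInt_st_zero hj hji hj₀ hik hkn] at hle
  exact max_eq_left hle

end SlackSums
section Moves
variable {n : ℕ} {c a : ℕ → ℤ} {k j₀ i₀ K q i : ℕ}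

lemma SEtight_st (hj : 1 ≤ q) (hq : q ≤ i) (hin : i + 1 ≤ n)
    (h1 : i + 1 ≤ K + q) (h2 : K + q ≤ n) (hKk : K ≠ k) :
    SEtight n c (st n a k j₀ i₀) (i, K, q) := by
  unfold SEtight dP seNode
  dsimp only
  rw [ext_st, ext_st,
    Ev_node (v := (i, K, q)) (by rw [isNode_iff]; omega),
    Ev_node (v := (i + 1, K, q + 1)) (by rw [isNode_iff]; omega)]
  dsimp only
  split_ifs <;> omega

lemma SWtight_st (hj : 1 ≤ q) (hq : q ≤ i) (hin : i + 1 ≤ n)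
    (h1 : i + 2 ≤ K + q) (h2 : K + q ≤ n + 1)
    (hne : ¬(K = k ∧ q = j₀ ∧ i = i₀)) :
    SWtight n c (st n a k j₀ i₀) (i, K, q) := by
  unfold SWtight dP swNode
  dsimp only
  rw [ext_st, ext_st,
    Ev_node (v := (i + 1, K, q)) (by rw [isNode_iff]; omega),
    Ev_node (v := (i, K, q)) (by rw [isNode_iff]; omega)]
  dsimp only
  split_ifs <;> omega

lemma st_switchAt_active (hk1 : 1 ≤ k) (hj₀1 : 1 ≤ j₀) (hj₀n : j₀ + k ≤ n + 1)
    (hji : j₀ ≤ i₀) (hi₀b : i₀ + 1 ≤ j₀ + k) :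
    SwitchAt n c (st n a k j₀ i₀) i₀ j₀ k := by
  constructor
  · intro K' hK'1 hK'2
    rcases Nat.lt_or_ge i₀ n with hlt | hge
    · exact SEtight_st (by omega) (by omega) (by omega) (by omega) (by omega) (by omega)
    · exact absurd hK'2 (by omega)
  · intro K' hK'2 hK'n
    rcases Nat.lt_or_ge i₀ n with hlt | hge
    · exact SWtight_st (by omega) (by omega) (by omega) (by omega) (by omega) (by omega)
    · exact absurd hK'2 (by omega)

lemma st_feasible (hk1 : 1 ≤ k) (hj₀1 : 1 ≤ j₀) (hj₀n : j₀ + k ≤ n + 1)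
    (hi₀a : j₀ ≤ i₀ + 1) (hi₀b : i₀ + 1 ≤ j₀ + k)
    (ha0 : ∀ K, 1 ≤ K → K ≤ n → 0 ≤ a K ∧ a K ≤ c K) (hak : a k + 1 ≤ c k) :
    Feasible n c (st n a k j₀ i₀) := by
  refine ⟨?_, ?_, ?_, ?_⟩
  · rintro ⟨ui, uK, uj⟩ ⟨wi, wK, wj⟩ ⟨hu, hw, hd⟩
    rw [isNode_iff] at hu hw
    unfold st
    rw [if_pos (show IsNode n (ui, uK, uj) by rw [isNode_iff]; exact hu),
      if_pos (show IsNode n (wi, wK, wj) by rw [isNode_iff]; exact hw)]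
    dsimp only
    obtain ⟨e1, e2, e3⟩ | ⟨e1, e2, e3⟩ := hd <;> dsimp only at e1 e2 e3 <;> subst e1 <;>
      split_ifs <;> omega
  · rintro ⟨vi, vK, vj⟩ hv
    rw [isNode_iff] at hv
    unfold st
    rw [if_pos (show IsNode n (vi, vK, vj) by rw [isNode_iff]; exact hv)]
    dsimp only
    rcases eq_or_ne vK k with rfl | hKk
    · have := ha0 vK (by omega) (by omega)
      split_ifs <;> omega
    · have := ha0 vK (by omega) (by omega)
      split_ifs <;> omega
  · intro i q hq1 hqi hin
    by_cases hcase : i = i₀ ∧ q = j₀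
    · obtain ⟨rfl, rfl⟩ := hcase
      exact ⟨k, by omega, by omega, st_switchAt_active hk1 hj₀1 hj₀n (by omega) hi₀b⟩
    · refine ⟨i + 1 - q, by omega, by omega, ?_, ?_⟩
      · intro K' hK'1 hK'2
        exact absurd hK'1 (by omega)
      · intro K' hK'2 hK'n
        rcases Nat.lt_or_ge i n with hlt | hge
        · refine SWtight_st (by omega) (by omega) (by omega) (by omega) (by omega) ?_
          rintro ⟨hKk, hqj, hii⟩
          exact hcase ⟨hii, hqj⟩
        · exact absurd hK'2 (by omega)
  · intro v hv
    unfold st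
    rw [if_neg hv]

lemma st_isSwitch (hk1 : 1 ≤ k) (hj₀1 : 1 ≤ j₀) (hj₀n : j₀ + k ≤ n + 1)
    (hji : j₀ ≤ i₀) (hi₀b : i₀ + 1 ≤ j₀ + k) :
    IsSwitchNode n c (st n a k j₀ i₀) i₀ j₀ k := by
  refine ⟨by omega, by omega, st_switchAt_active hk1 hj₀1 hj₀n hji hi₀b, ?_⟩
  intro K' hK' hSw
  by_contra hlt
  push_neg at hlt
  have hswk := hSw.2 k hlt (by omega)
  have hle : i₀ + 2 ≤ k + j₀ := by omega
  have hin : i₀ + 1 ≤ n := by omega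
  unfold SWtight dP swNode at hswk
  dsimp only at hswk
  rw [ext_st, ext_st,
    Ev_node (v := (i₀ + 1, k, j₀)) (by rw [isNode_iff]; omega),
    Ev_node (v := (i₀, k, j₀)) (by rw [isNode_iff]; omega)] at hswk
  dsimp only at hswk
  split_ifs at hswk <;> omega

lemma st_move (hk1 : 1 ≤ k) (hj₀1 : 1 ≤ j₀) (hj₀n : j₀ + k ≤ n + 1)
    (hji : j₀ ≤ i₀) (hi₀b : i₀ + 1 ≤ j₀ + k)
    (ha0 : ∀ K, 1 ≤ K → K ≤ n → 0 ≤ a K ∧ a K ≤ c K) (hak : a k + 1 ≤ c k) :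
    Move n c i₀ (st n a k j₀ i₀) (st n a k j₀ (i₀ - 1)) := by
  refine ⟨st_feasible hk1 hj₀1 hj₀n (by omega) hi₀b ha0 hak,
    st_feasible hk1 hj₀1 hj₀n (by omega) (by omega) ha0 hak,
    by omega, by omega, j₀, k,
    ⟨hj₀1, hji, redSlack_st_pos hj₀1 hji hi₀b hj₀n ha0 hak,
      fun q hq1 hq2 => redSlack_st_zero hq1 hq2 hj₀1 hi₀b hj₀n⟩,
    st_isSwitch hk1 hj₀1 hj₀n hji hi₀b, ?_⟩
  funext ⟨vi, vK, vj⟩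
  rw [Function.update_apply]
  by_cases hv : ((vi, vK, vj) : Node) = (i₀, k, j₀)
  · rw [if_pos hv]
    rw [Prod.ext_iff, Prod.ext_iff] at hv
    obtain ⟨h1, h2, h3⟩ := hv
    dsimp only at h1 h2 h3
    subst h1; subst h2; subst h3
    unfold st
    rw [if_pos (show IsNode n (vi, vK, vj) by rw [isNode_iff]; omega),
      if_pos (show IsNode n (vi, vK, vj) by rw [isNode_iff]; omega)]
    dsimp only
    split_ifs <;> omega
  · rw [if_neg hv]
    have hv' : ¬(vi = i₀ ∧ vK = k ∧ vj = j₀) := by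
      rintro ⟨rfl, rfl, rfl⟩; exact hv rfl
    unfold st
    dsimp only
    split_ifs <;> omega

end Moves
section Chains
variable {n : ℕ} {c a : ℕ → ℤ} {k j₀ : ℕ}

lemma seqRel_append {L1 L2 : List ℕ} {f g h : Node → ℤ} (h1 : SeqRel n c L1 f g)
    (h2 : SeqRel n c L2 g h) : SeqRel n c (L1 ++ L2) f h := by
  induction L1 generalizing f with
  | nil => rw [show f = g from h1]; exact h2
  | cons i L ih =>
      obtain ⟨m, hm, hrest⟩ := h1
      exact ⟨m, hm, ih hrest⟩

lemma run_block (hk1 : 1 ≤ k) (hj₀1 : 1 ≤ j₀) (hj₀n : j₀ + k ≤ n + 1)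
    (ha0 : ∀ K, 1 ≤ K → K ≤ n → 0 ≤ a K ∧ a K ≤ c K) (hak : a k + 1 ≤ c k) :
    ∀ d, d ≤ k → SeqRel n c ((List.range d).map fun t => j₀ + k - 1 - t)
      (st n a k j₀ (j₀ + k - 1)) (st n a k j₀ (j₀ + k - 1 - d)) := by
  intro d
  induction d with
  | zero => intro _; rfl
  | succ d ih =>
      intro hd
      rw [List.range_succ, List.map_append]
      refine seqRel_append (ih (by omega)) ?_
      have hmv := st_move (n := n) (c := c) (a := a) (i₀ := j₀ + k - 1 - d)
        hk1 hj₀1 hj₀n (by omega) (by omega) ha0 hak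
      have he : j₀ + k - 1 - d - 1 = j₀ + k - 1 - (d + 1) := by omega
      rw [he] at hmv
      exact ⟨_, hmv, rfl⟩

lemma st_next (hj₀1 : 1 ≤ j₀) (hk1 : 1 ≤ k) :
    st n a k j₀ (j₀ - 1) = st n a k (j₀ + 1) (j₀ + k) := by
  funext ⟨vi, vK, vj⟩
  unfold st
  simp only [isNode_iff]
  split_ifs <;> omega

lemma run_sList (hk1 : 1 ≤ k)
    (ha0 : ∀ K, 1 ≤ K → K ≤ n → 0 ≤ a K ∧ a K ≤ c K) (hak : a k + 1 ≤ c k) :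
    ∀ m, m + k ≤ n + 1 → SeqRel n c (((List.range m).map fun t => wList k (t + 1)).flatten)
      (st n a k 1 k) (st n a k (m + 1) (m + k)) := by
  intro m
  induction m with
  | zero =>
      intro _
      show st n a k 1 k = st n a k (0 + 1) (0 + k)
      norm_num
  | succ m ih =>
      intro hm
      rw [List.range_succ, List.map_append, List.flatten_append]
      refine seqRel_append (ih (by omega)) ?_
      have hb := run_block (j₀ := m + 1) hk1 (by omega) (by omega) ha0 hak k le_rfl
      rw [show m + 1 + k - 1 = m + k from by omega] at hb
      rw [show m + k - k = m from by omega] at hb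
      have e3 : st n a k (m + 1) m = st n a k (m + 1 + 1) (m + 1 + k) := by
        have h := st_next (n := n) (a := a) (j₀ := m + 1) (k := k) (by omega) hk1
        rwa [show m + 1 - 1 = m from by omega] at h
      rw [e3] at hb
      have hl : (List.map (fun t => wList k (t + 1)) [m]).flatten
          = List.map (fun t => m + k - t) (List.range k) := by
        simp only [List.map_cons, List.map_nil, List.flatten_cons, List.flatten_nil,
          List.append_nil, wList]
        exact List.map_congr_left (fun t _ => by omega)
      rw [hl]
      exact hb

lemma st_init : st n a k 1 k = principal n a := by
  funext ⟨vi, vK, vj⟩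
  unfold st principal
  simp only [isNode_iff]
  split_ifs <;> omega

lemma st_final (hk1 : 1 ≤ k) (hkn : k ≤ n) :
    st n a k (n + 1 - k + 1) (n + 1 - k + k) = principal n (Function.update a k (a k + 1)) := by
  funext ⟨vi, vK, vj⟩
  unfold st principal
  simp only [isNode_iff, Function.update_apply]
  rcases eq_or_ne vK k with rfl | hKk
  · split_ifs <;> omega
  · split_ifs <;> omega

/-- The basic step: `S_{n,k}` maps `f[a]` to `f[a + 1_k]`. -/
lemma sList_step (hk1 : 1 ≤ k) (hkn : k ≤ n)
    (ha0 : ∀ K, 1 ≤ K → K ≤ n → 0 ≤ a K ∧ a K ≤ c K) (hak : a k + 1 ≤ c k) :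
    SeqRel n c (sList n k) (principal n a)
      (principal n (Function.update a k (a k + 1))) := by
  have h := run_sList hk1 ha0 hak (n + 1 - k) (by omega)
  rw [st_init, st_final hk1 hkn] at h
  rw [sList, show n - k + 1 = n + 1 - k from by omega]
  exact h

end Chains
section Powers
variable {n : ℕ} {c : ℕ → ℤ} {k : ℕ}

lemma principal_congr {f g : ℕ → ℤ} (h : ∀ K, 1 ≤ K → K ≤ n → f K = g K) :
    principal n f = principal n g := by
  funext ⟨vi, vK, vj⟩
  unfold principal
  split_ifs with hv
  · rw [isNode_iff] at hv
    exact h vK (by omega) (by omega)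
  · rfl

lemma sPow_run (hk1 : 1 ≤ k) (hkn : k ≤ n) :
    ∀ (m : ℕ) (b : ℕ → ℤ), (∀ K, 1 ≤ K → K ≤ n → 0 ≤ b K ∧ b K ≤ c K) →
      b k + m ≤ c k →
      SeqRel n c (sPow n k m) (principal n b)
        (principal n (Function.update b k (b k + m))) := by
  intro m
  induction m with
  | zero =>
      intro b hb0 hbk
      show principal n b = _
      refine principal_congr (fun K _ _ => ?_)
      rw [Function.update_apply]
      split_ifs with h
      · rw [h]; push_cast; ring
      · rfl
  | succ m ih =>
      intro b hb0 hbk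
      rw [sPow, List.replicate_succ, List.flatten_cons]
      refine seqRel_append (sList_step hk1 hkn hb0 (by push_cast at hbk; omega)) ?_
      have hb' : ∀ K, 1 ≤ K → K ≤ n →
          0 ≤ Function.update b k (b k + 1) K ∧ Function.update b k (b k + 1) K ≤ c K := by
        intro K h1 h2
        have h0 := hb0 K h1 h2
        rw [Function.update_apply]
        split_ifs with h
        · subst h; push_cast at hbk; omega
        · exact h0
      have hbk' : Function.update b k (b k + 1) k + (m : ℤ) ≤ c k := by
        rw [Function.update_self]; push_cast at hbk; omega
      have hstep := ih (Function.update b k (b k + 1)) hb' hbk'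
      have he : Function.update (Function.update b k (b k + 1)) k
            (Function.update b k (b k + 1) k + (m : ℤ))
          = Function.update b k (b k + ((m : ℕ) + 1 : ℕ)) := by
        rw [Function.update_self, Function.update_idem]
        congr 1
        push_cast; ring
      rw [he] at hstep
      exact hstep

lemma chain_run (hc : ∀ K, 1 ≤ K → K ≤ n → 0 ≤ c K) (a : ℕ → ℤ)
    (ha : ∀ K, 1 ≤ K → K ≤ n → 0 ≤ a K ∧ a K ≤ c K) :
    ∀ m, m ≤ n →
      SeqRel n c (((List.range m).map fun t => sPow n (t + 1) ((a (t + 1)).toNat)).flatten)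
        (principal n fun _ => 0) (principal n fun K => if K ≤ m then a K else 0) := by
  intro m
  induction m with
  | zero =>
      intro _
      show principal n (fun _ => 0) = _
      exact principal_congr (fun K h1 h2 => by rw [if_neg (by omega)])
  | succ m ih =>
      intro hm
      rw [List.range_succ, List.map_append, List.flatten_append]
      refine seqRel_append (ih (by omega)) ?_
      have h0 := ha (m + 1) (by omega) (by omega)
      have hb0 : ∀ K, 1 ≤ K → K ≤ n →
          0 ≤ (fun K => if K ≤ m then a K else (0 : ℤ)) K ∧
            (fun K => if K ≤ m then a K else (0 : ℤ)) K ≤ c K := by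
        intro K h1 h2
        dsimp only
        split_ifs
        · exact ha K h1 h2
        · exact ⟨le_rfl, hc K h1 h2⟩
      have hbk : (fun K => if K ≤ m then a K else (0 : ℤ)) (m + 1)
          + ((a (m + 1)).toNat : ℤ) ≤ c (m + 1) := by
        dsimp only
        rw [if_neg (by omega), Int.toNat_of_nonneg h0.1]
        omega
      have hstep := sPow_run (k := m + 1) (by omega) (by omega) ((a (m + 1)).toNat) _ hb0 hbk
      have he : principal n (Function.update (fun K => if K ≤ m then a K else (0 : ℤ)) (m + 1)
            ((fun K => if K ≤ m then a K else (0 : ℤ)) (m + 1) + ((a (m + 1)).toNat : ℤ)))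
          = principal n fun K => if K ≤ m + 1 then a K else 0 := by
        refine principal_congr (fun K h1 h2 => ?_)
        rw [Function.update_apply]
        dsimp only
        rw [if_neg (show ¬ m + 1 ≤ m by omega), Int.toNat_of_nonneg h0.1]
        by_cases hK1 : K = m + 1
        · subst hK1
          rw [if_pos rfl, if_pos (by omega)]
          ring
        · rw [if_neg hK1]
          by_cases hKm : K ≤ m
          · rw [if_pos hKm, if_pos (by omega)]
          · rw [if_neg hKm, if_neg (by omega)]
      rw [he] at hstep
      simpa using hstep

end Powers
/-- Proposition 2.2. `S_{n,k}(f[a]) = f[a + 1_k]`; applicable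
principal strings commute on the principal lattice; and every principal function is
`f[a] = S_{n,n}^{a_n}(⋯(S_{n,1}^{a_1}(f[0]))⋯)`. -/
theorem statement7 (n : ℕ) (hn : 1 ≤ n) (c a : ℕ → ℤ)
    (hc : ∀ k, 1 ≤ k → k ≤ n → 0 ≤ c k)
    (ha : ∀ k, 1 ≤ k → k ≤ n → 0 ≤ a k ∧ a k ≤ c k)
    (k : ℕ) (hk1 : 1 ≤ k) (hk2 : k ≤ n) (hak : a k + 1 ≤ c k) :
    SeqRel n c (sList n k) (principal n a)
      (principal n (Function.update a k (a k + 1))) ∧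
    (∀ k', 1 ≤ k' → k' ≤ n → k' ≠ k → a k' + 1 ≤ c k' →
      SeqRel n c (sList n k' ++ sList n k) (principal n a)
        (principal n (Function.update (Function.update a k (a k + 1)) k' (a k' + 1))) ∧
      SeqRel n c (sList n k ++ sList n k') (principal n a)
        (principal n (Function.update (Function.update a k (a k + 1)) k' (a k' + 1)))) ∧
    SeqRel n c (sPowChain n (fun t => (a t).toNat) n) (principal n fun _ => 0)
      (principal n a) := by
  refine ⟨sList_step hk1 hk2 ha hak, fun k' hk'1 hk'2 hne hak' => ⟨?_, ?_⟩, ?_⟩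
  · -- S_{n,k} after S_{n,k'}
    refine seqRel_append (sList_step hk'1 hk'2 ha hak') ?_
    have hb0 : ∀ K, 1 ≤ K → K ≤ n →
        0 ≤ Function.update a k' (a k' + 1) K ∧ Function.update a k' (a k' + 1) K ≤ c K := by
      intro K h1 h2
      rw [Function.update_apply]
      split_ifs with h
      · subst h
        have := ha K h1 h2
        omega
      · exact ha K h1 h2
    have hbk : Function.update a k' (a k' + 1) k + 1 ≤ c k := by
      rw [Function.update_of_ne hne.symm]; exact hak
    have hstep := sList_step (a := Function.update a k' (a k' + 1)) hk1 hk2 hb0 hbk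
    have he : Function.update (Function.update a k' (a k' + 1)) k
          (Function.update a k' (a k' + 1) k + 1)
        = Function.update (Function.update a k (a k + 1)) k' (a k' + 1) := by
      rw [Function.update_of_ne hne.symm, Function.update_comm hne]
    rw [he] at hstep
    exact hstep
  · -- S_{n,k'} after S_{n,k}
    refine seqRel_append (sList_step hk1 hk2 ha hak) ?_
    have hb0 : ∀ K, 1 ≤ K → K ≤ n →
        0 ≤ Function.update a k (a k + 1) K ∧ Function.update a k (a k + 1) K ≤ c K := by
      intro K h1 h2
      rw [Function.update_apply]
      split_ifs with h
      · subst h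
        have := ha K h1 h2
        omega
      · exact ha K h1 h2
    have hbk : Function.update a k (a k + 1) k' + 1 ≤ c k' := by
      rw [Function.update_of_ne hne]; exact hak'
    have hstep := sList_step (a := Function.update a k (a k + 1)) hk'1 hk'2 hb0 hbk
    have he : Function.update a k (a k + 1) k' = a k' := Function.update_of_ne hne _ _
    rw [he] at hstep
    exact hstep
  · -- the power chain
    have h := chain_run hc a ha n le_rfl
    have he : principal n (fun K => if K ≤ n then a K else 0) = principal n a :=
      principal_congr (fun K h1 h2 => by rw [if_pos h2])
    rw [he] at h
    rw [sPowChain]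
    exact h
end CrystalA
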